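/- arXiv:2504.11676 — 3 statements merged into one kernel-verified Lean document; each statement's English description precedes it below -/
import Mathlib

section
/- For every real 3×3 matrix Q that is symmetric and traceless, ⟨f(Q), Q⟩_F ≤ (γ/2)·‖Q‖_F²·(b − ‖Q‖_F²), and consequently ⟨f(Q), Q⟩_F ≤ γ·b²/8. -/
/-
Expanding, `⟨f(Q), Q⟩ = −α s + β c − γ s²` with `s = tr Q²` and `c = tr Q³`; the identity term
drops out because `Q` is traceless. Writing `c = ⟨Q, Q²⟩_F`, Cauchy–Schwarz and submultiplicativity
of the Frobenius norm give `c² ≤ s³`, so AM–GM yields `2γβc ≤ β²s + γ²s²`, which is exactly the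
first bound. The second is the maximum `γb²/8` of the parabola `s ↦ (γ/2) s (b − s)`.
-/

open Matrix

/-- The Q-tensor bulk nonlinearity:
`f(Q) = −α·Q + β·(Q² − (1/3)·trace(Q²)·I) − γ·trace(Q²)·Q`. -/
noncomputable def fQ (α β γ : ℝ) (Q : Matrix (Fin 3) (Fin 3) ℝ) : Matrix (Fin 3) (Fin 3) ℝ :=
  -(α • Q) + β • (Q * Q - ((Matrix.trace (Q * Q)) / 3) • (1 : Matrix (Fin 3) (Fin 3) ℝ))
    - (γ * Matrix.trace (Q * Q)) • Q

/-- The Frobenius inner product `⟨A,B⟩_F = trace(Aᵀ B)`. -/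
def frobInner (A B : Matrix (Fin 3) (Fin 3) ℝ) : ℝ := Matrix.trace (Aᵀ * B)

/-- The Frobenius norm `‖A‖_F = (trace(Aᵀ A))^{1/2}`. -/
noncomputable def frobNorm (A : Matrix (Fin 3) (Fin 3) ℝ) : ℝ :=
  Real.sqrt (Matrix.trace (Aᵀ * A))

namespace Matrix

variable {l m n : Type*} [Fintype l] [Fintype m] [Fintype n]

theorem trace_transpose_mul_eq_sum (A B : Matrix m n ℝ) :
    trace (Aᵀ * B) = ∑ i, ∑ j, A i j * B i j := by
  simp only [trace, diag, mul_apply, transpose_apply]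
  exact Finset.sum_comm

theorem trace_transpose_mul_self_nonneg (A : Matrix m n ℝ) : 0 ≤ trace (Aᵀ * A) := by
  rw [trace_transpose_mul_eq_sum]
  exact Finset.sum_nonneg fun i _ => Finset.sum_nonneg fun j _ => mul_self_nonneg (A i j)

theorem trace_transpose_mul_sq_le (A B : Matrix m n ℝ) :
    trace (Aᵀ * B) ^ 2 ≤ trace (Aᵀ * A) * trace (Bᵀ * B) := by
  simp only [trace_transpose_mul_eq_sum, ← Fintype.sum_prod_type', ← pow_two]
  exact Finset.sum_mul_sq_le_sq_mul_sq _ _ _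

section Frobenius

attribute [local instance] frobeniusNormedAddCommGroup

theorem frobenius_norm_sq_eq_trace (A : Matrix m n ℝ) : ‖A‖ ^ 2 = trace (Aᵀ * A) := by
  have hsum : ∑ i, ∑ j, ‖A i j‖ ^ (2 : ℝ) = trace (Aᵀ * A) := by
    simp [trace_transpose_mul_eq_sum, pow_two]
  rw [frobenius_norm_def, hsum, ← Real.sqrt_eq_rpow,
    Real.sq_sqrt (trace_transpose_mul_self_nonneg A)]

theorem trace_transpose_mul_self_mul_le (A : Matrix l m ℝ) (B : Matrix m n ℝ) :
    trace ((A * B)ᵀ * (A * B)) ≤ trace (Aᵀ * A) * trace (Bᵀ * B) := by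
  simp only [← frobenius_norm_sq_eq_trace, ← mul_pow]
  gcongr
  exact frobenius_norm_mul A B

end Frobenius

theorem trace_mul_self_mul_self_sq_le {Q : Matrix n n ℝ} (hQ : Qᵀ = Q) :
    trace (Q * Q * Q) ^ 2 ≤ trace (Q * Q) ^ 3 := by
  have hc : trace (Q * Q * Q) = trace (Qᵀ * (Q * Q)) := by
    rw [hQ, ← Matrix.mul_assoc, trace_mul_comm]
  calc trace (Q * Q * Q) ^ 2 ≤ trace (Qᵀ * Q) * trace ((Q * Q)ᵀ * (Q * Q)) :=
        hc ▸ trace_transpose_mul_sq_le Q (Q * Q)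
    _ ≤ trace (Qᵀ * Q) * (trace (Qᵀ * Q) * trace (Qᵀ * Q)) := by
        gcongr
        · exact trace_transpose_mul_self_nonneg Q
        · exact trace_transpose_mul_self_mul_le Q Q
    _ = trace (Q * Q) ^ 3 := by rw [hQ]; ring

end Matrix

theorem two_mul_mul_mul_le_of_sq_le_cube {x y c s : ℝ} (hs : 0 ≤ s) (hc : c ^ 2 ≤ s ^ 3) :
    2 * y * x * c ≤ x ^ 2 * s + y ^ 2 * s ^ 2 := by
  have hsq : (2 * y * x * c) ^ 2 ≤ (x ^ 2 * s + y ^ 2 * s ^ 2) ^ 2 :=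
    calc (2 * y * x * c) ^ 2 = 4 * (x ^ 2 * y ^ 2) * c ^ 2 := by ring
      _ ≤ 4 * (x ^ 2 * y ^ 2) * s ^ 3 := by gcongr
      _ ≤ (x ^ 2 * s + y ^ 2 * s ^ 2) ^ 2 := by nlinarith [sq_nonneg (x ^ 2 * s - y ^ 2 * s ^ 2)]
  exact (abs_le_of_sq_le_sq' hsq (by positivity)).2

theorem frobNorm_sq (A : Matrix (Fin 3) (Fin 3) ℝ) : frobNorm A ^ 2 = trace (Aᵀ * A) :=
  Real.sq_sqrt (trace_transpose_mul_self_nonneg A)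

theorem frobInner_fQ_self (α β γ : ℝ) {Q : Matrix (Fin 3) (Fin 3) ℝ} (hQsymm : Qᵀ = Q)
    (hQtr : trace Q = 0) :
    frobInner (fQ α β γ Q) Q =
      -α * trace (Q * Q) + β * trace (Q * Q * Q) - γ * trace (Q * Q) ^ 2 := by
  simp only [frobInner, fQ, transpose_add, transpose_sub, transpose_smul, transpose_neg,
    transpose_mul, transpose_one, hQsymm, Matrix.add_mul, Matrix.sub_mul, Matrix.smul_mul,
    Matrix.neg_mul, Matrix.one_mul, trace_add, trace_sub, trace_smul, trace_neg, smul_eq_mul,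
    hQtr]
  ring

/-- With `b = β²/γ² − 2α/γ`, for symmetric traceless `Q`:
`⟨f(Q),Q⟩_F ≤ (γ/2)‖Q‖_F²(b − ‖Q‖_F²)`, and consequently `⟨f(Q),Q⟩_F ≤ γ·b²/8`. -/
theorem stmt7 (α β γ : ℝ) (hγ : 0 < γ) (b : ℝ) (hb : b = β ^ 2 / γ ^ 2 - 2 * α / γ)
    (Q : Matrix (Fin 3) (Fin 3) ℝ) (hQsymm : Qᵀ = Q) (hQtr : Matrix.trace Q = 0) :
    frobInner (fQ α β γ Q) Q ≤ (γ / 2) * frobNorm Q ^ 2 * (b - frobNorm Q ^ 2) ∧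
      frobInner (fQ α β γ Q) Q ≤ γ * b ^ 2 / 8 := by
  have hs : frobNorm Q ^ 2 = trace (Q * Q) := by rw [frobNorm_sq, hQsymm]
  have hs0 : 0 ≤ trace (Q * Q) := hs ▸ sq_nonneg _
  have hcubic := two_mul_mul_mul_le_of_sq_le_cube (x := β) (y := γ) hs0
    (trace_mul_self_mul_self_sq_le hQsymm)
  set s := trace (Q * Q)
  set c := trace (Q * Q * Q)
  have h1 : frobInner (fQ α β γ Q) Q ≤ (γ / 2) * frobNorm Q ^ 2 * (b - frobNorm Q ^ 2) := by
    rw [frobInner_fQ_self α β γ hQsymm hQtr, hs, hb, ← sub_nonneg]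
    have hgap : γ / 2 * s * (β ^ 2 / γ ^ 2 - 2 * α / γ - s) - (-α * s + β * c - γ * s ^ 2) =
        (β ^ 2 * s + γ ^ 2 * s ^ 2 - 2 * γ * β * c) / (2 * γ) := by
      field_simp
      ring
    rw [hgap]
    exact div_nonneg (by linarith) (by positivity)
  refine ⟨h1, h1.trans ?_⟩
  nlinarith [mul_nonneg hγ.le (sq_nonneg (b - 2 * frobNorm Q ^ 2))]
end

section
/- Let a > 0 satisfy b < a². Then there exists τ₀ > 0 (depending only on α, β, γ, a) such that for every time step 0 < τ ≤ τ₀ and every real 3×3 matrix Q that is symmetric and traceless with ‖Q‖_F ≤ a, one has ‖Q + τ·f(Q)‖_F ≤ a. -/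
open Matrix

attribute [local instance] Matrix.frobeniusNormedAddCommGroup Matrix.frobeniusNormedSpace

/-!
Identify a matrix `A` with the Euclidean vector `vec A`, so that the Frobenius norm is Euclidean
and `tr (Aᵀ B)` is the inner product. For symmetric traceless `Q` with `x = ‖Q‖² ≤ a²`,
`tr (Q f(Q)) = -α x + β tr Q³ - γ x² ≤ x (|β| a - α - γ x) = x (γ (a² - x) - q)`, where
`b < a²` makes the margin `q = γ a² + α - |β| a` positive. As `f` is bounded on the ball,
`‖Q + τ f(Q)‖² = x + 2 τ tr (Q f(Q)) + O(τ²)`, and for small `τ` the slack `a² - x` near the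
centre and the inward drift `-2 τ q x` near the sphere absorb the `O(τ²)` term.
-/

open RealInnerProductSpace

section EulerStep

variable {E : Type*} [NormedAddCommGroup E] [InnerProductSpace ℝ E]

theorem norm_add_smul_le_of_inner_le {u v : E} {a C κ q τ : ℝ} (hκ : 0 ≤ κ) (hτ : 0 ≤ τ)
    (hu : ‖u‖ ≤ a) (hv : ‖v‖ ≤ C)
    (huv : ⟪u, v⟫ ≤ ‖u‖ ^ 2 * (κ * (a ^ 2 - ‖u‖ ^ 2) - q))
    (hτκ : τ * (2 * κ * a ^ 2 + 2 * q) ≤ 1) (hτC : τ * C ^ 2 ≤ 2 * q * a ^ 2) :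
    ‖u + τ • v‖ ≤ a := by
  have ha : 0 ≤ a := (norm_nonneg u).trans hu
  have hx : ‖u‖ ^ 2 ≤ a ^ 2 := pow_le_pow_left₀ (norm_nonneg u) hu 2
  have hvC : ‖v‖ ^ 2 ≤ C ^ 2 := pow_le_pow_left₀ (norm_nonneg v) hv 2
  refine (pow_le_pow_iff_left₀ (norm_nonneg _) ha two_ne_zero).1 ?_
  set x := ‖u‖ ^ 2
  -- `a² - x - 2τx(κ(a² - x) - q) ≥ (a² - x) · 2τq + 2τqx = 2τqa²`, which pays for `τ²C²`.
  calc ‖u + τ • v‖ ^ 2 = x + 2 * τ * ⟪u, v⟫ + τ ^ 2 * ‖v‖ ^ 2 := by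
        rw [norm_add_sq_real, real_inner_smul_right, norm_smul, Real.norm_of_nonneg hτ]
        ring
    _ ≤ x + 2 * τ * (x * (κ * (a ^ 2 - x) - q)) + τ ^ 2 * C ^ 2 := by gcongr
    _ ≤ a ^ 2 := by
        nlinarith [mul_nonneg (sub_nonneg.2 hx) (mul_nonneg hτ (mul_nonneg hκ (sub_nonneg.2 hx))),
          mul_nonneg (sub_nonneg.2 hx) (sub_nonneg.2 hτκ), mul_nonneg hτ (sub_nonneg.2 hτC)]

theorem exists_pos_forall_norm_add_smul_le {a C κ q : ℝ} (ha : 0 < a) (hκ : 0 ≤ κ) (hq : 0 < q) :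
    ∃ τ₀ : ℝ, 0 < τ₀ ∧ ∀ τ : ℝ, 0 < τ → τ ≤ τ₀ → ∀ u v : E, ‖u‖ ≤ a → ‖v‖ ≤ C →
      ⟪u, v⟫ ≤ ‖u‖ ^ 2 * (κ * (a ^ 2 - ‖u‖ ^ 2) - q) → ‖u + τ • v‖ ≤ a := by
  refine ⟨min (1 / (2 * κ * a ^ 2 + 2 * q)) (2 * q * a ^ 2 / (C ^ 2 + 1)), by positivity,
    fun τ hτ hτ₀ u v hu hv huv => norm_add_smul_le_of_inner_le hκ hτ.le hu hv huv ?_ ?_⟩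
  · have := (le_div_iff₀ (by positivity)).1 (hτ₀.trans (min_le_left _ _))
    linarith
  · have := (le_div_iff₀ (by positivity)).1 (hτ₀.trans (min_le_right _ _))
    nlinarith

end EulerStep

section Frobenius

variable {m n : Type*} [Fintype m] [Fintype n]

theorem norm_toLp_vec (A : Matrix m n ℝ) : ‖WithLp.toLp 2 A.vec‖ = ‖A‖ := by
  rw [← sq_eq_sq₀ (norm_nonneg _) (norm_nonneg _), EuclideanSpace.norm_sq_eq]
  change _ = ‖WithLp.toLp 2 fun i => WithLp.toLp 2 fun j => A i j‖ ^ 2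
  simp only [PiLp.norm_sq_eq_of_L2, Real.norm_eq_abs, sq_abs, vec, Fintype.sum_prod_type]
  exact Finset.sum_comm

theorem inner_toLp_vec (A B : Matrix m n ℝ) :
    ⟪WithLp.toLp 2 A.vec, WithLp.toLp 2 B.vec⟫ = (Aᵀ * B).trace := by
  rw [EuclideanSpace.inner_eq_star_dotProduct, star_trivial, dotProduct_comm, vec_dotProduct_vec]

theorem trace_transpose_mul_self (A : Matrix m n ℝ) : (Aᵀ * A).trace = ‖A‖ ^ 2 := by
  rw [← inner_toLp_vec, real_inner_self_eq_norm_sq, norm_toLp_vec]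

theorem abs_trace_transpose_mul_le (A B : Matrix m n ℝ) : |(Aᵀ * B).trace| ≤ ‖A‖ * ‖B‖ := by
  simpa only [inner_toLp_vec, norm_toLp_vec] using
    abs_real_inner_le_norm (WithLp.toLp 2 A.vec) (WithLp.toLp 2 B.vec)

end Frobenius

theorem frobNorm_eq_norm (A : Matrix (Fin 3) (Fin 3) ℝ) : frobNorm A = ‖A‖ := by
  rw [frobNorm, trace_transpose_mul_self, Real.sqrt_sq (norm_nonneg A)]

theorem norm_fQ_le (α β γ : ℝ) {Q : Matrix (Fin 3) (Fin 3) ℝ} {a : ℝ} (hQ : ‖Q‖ ≤ a) :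
    ‖fQ α β γ Q‖ ≤ |α| * a + 2 * |β| * a ^ 2 + |γ| * a ^ 3 := by
  have hQ₀ : 0 ≤ ‖Q‖ := norm_nonneg Q
  have hQQ : ‖Q * Q‖ ≤ a ^ 2 := (frobenius_norm_mul Q Q).trans (by nlinarith)
  have hx : |(Q * Q).trace| ≤ a ^ 2 := by
    have := abs_trace_transpose_mul_le Qᵀ Q
    rw [transpose_transpose, frobenius_norm_transpose] at this
    nlinarith
  have hI : ‖(1 : Matrix (Fin 3) (Fin 3) ℝ)‖ ≤ 3 := by
    have h3 : ‖(1 : Matrix (Fin 3) (Fin 3) ℝ)‖ ^ 2 = 3 := by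
      rw [← trace_transpose_mul_self, transpose_one, Matrix.one_mul, trace_one, Fintype.card_fin,
        Nat.cast_ofNat]
    nlinarith [norm_nonneg (1 : Matrix (Fin 3) (Fin 3) ℝ)]
  calc ‖fQ α β γ Q‖
      ≤ |α| * ‖Q‖ + |β| * (‖Q * Q‖ + |(Q * Q).trace| / 3 * ‖(1 : Matrix (Fin 3) (Fin 3) ℝ)‖)
          + |γ| * |(Q * Q).trace| * ‖Q‖ := by
        refine (norm_sub_le _ _).trans (add_le_add ((norm_add_le _ _).trans ?_) ?_)
        · rw [norm_neg, norm_smul, norm_smul, Real.norm_eq_abs, Real.norm_eq_abs]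
          gcongr
          refine (norm_sub_le _ _).trans_eq ?_
          rw [norm_smul, Real.norm_eq_abs, abs_div, abs_of_pos (three_pos : (0 : ℝ) < 3)]
        · rw [norm_smul, Real.norm_eq_abs, abs_mul]
    _ ≤ |α| * a + |β| * (a ^ 2 + a ^ 2 / 3 * 3) + |γ| * a ^ 2 * a := by gcongr
    _ = |α| * a + 2 * |β| * a ^ 2 + |γ| * a ^ 3 := by ring

theorem trace_transpose_mul_fQ_le {α β γ : ℝ} {Q : Matrix (Fin 3) (Fin 3) ℝ} {a : ℝ}
    (hsym : Qᵀ = Q) (htr : Q.trace = 0) (hQ : ‖Q‖ ≤ a) :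
    (Qᵀ * fQ α β γ Q).trace ≤ ‖Q‖ ^ 2 * (|β| * a - α - γ * ‖Q‖ ^ 2) := by
  have hx : (Q * Q).trace = ‖Q‖ ^ 2 := by
    rw [← trace_transpose_mul_self, hsym]
  have hcube : β * (Qᵀ * (Q * Q)).trace ≤ |β| * (a * ‖Q‖ ^ 2) := by
    have hQQ := frobenius_norm_mul Q Q
    calc β * (Qᵀ * (Q * Q)).trace ≤ |β| * |(Qᵀ * (Q * Q)).trace| := by
          rw [← abs_mul]; exact le_abs_self _
      _ ≤ |β| * (a * ‖Q‖ ^ 2) := by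
          gcongr
          refine (abs_trace_transpose_mul_le Q (Q * Q)).trans ?_
          nlinarith [norm_nonneg Q, norm_nonneg (Q * Q)]
  simp only [fQ, hx, Matrix.mul_add, Matrix.mul_sub, Matrix.mul_neg, Matrix.mul_smul,
    Matrix.mul_one, trace_add, trace_sub, trace_neg, trace_smul, trace_transpose, htr,
    trace_transpose_mul_self, smul_eq_mul, mul_zero, sub_zero]
  linarith

theorem abs_mul_lt_mul_sq_add {α β γ a : ℝ} (hγ : 0 < γ) (ha : 0 < a)
    (h : β ^ 2 / γ ^ 2 - 2 * α / γ < a ^ 2) : |β| * a < γ * a ^ 2 + α := by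
  have hγa : β ^ 2 < γ * (γ * a ^ 2 + 2 * α) := by
    rw [show β ^ 2 / γ ^ 2 - 2 * α / γ = (β ^ 2 - 2 * α * γ) / γ ^ 2 by field_simp,
      div_lt_iff₀ (by positivity)] at h
    linarith
  have hpos : 0 < γ * a ^ 2 + α := by nlinarith [sq_nonneg β, mul_pos hγ (pow_pos ha 2)]
  have hsq : (β * a) ^ 2 < (γ * a ^ 2 + α) ^ 2 := by
    nlinarith [mul_lt_mul_of_pos_right hγa (pow_pos ha 2), sq_nonneg α]
  calc |β| * a = |β * a| := by rw [abs_mul, abs_of_pos ha]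
    _ < γ * a ^ 2 + α := abs_lt_of_sq_lt_sq hsq hpos.le

/-- Stability of the Euler step: if `b < a²` then for small enough `τ`,
`‖Q + τ·f(Q)‖_F ≤ a` for symmetric traceless `Q` with `‖Q‖_F ≤ a`. -/
theorem stmt12 (α β γ : ℝ) (hγ : 0 < γ) (b : ℝ) (hb : b = β ^ 2 / γ ^ 2 - 2 * α / γ)
    (a : ℝ) (ha : 0 < a) (hba : b < a ^ 2) :
    ∃ τ₀ : ℝ, 0 < τ₀ ∧
      ∀ τ : ℝ, 0 < τ → τ ≤ τ₀ →
        ∀ Q : Matrix (Fin 3) (Fin 3) ℝ, Qᵀ = Q → Matrix.trace Q = 0 → frobNorm Q ≤ a →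
          frobNorm (Q + τ • fQ α β γ Q) ≤ a := by
  have hmargin : 0 < γ * a ^ 2 + α - |β| * a :=
    sub_pos.2 (abs_mul_lt_mul_sq_add hγ ha (hb ▸ hba))
  obtain ⟨τ₀, hτ₀_pos, hstep⟩ := exists_pos_forall_norm_add_smul_le
    (E := EuclideanSpace ℝ (Fin 3 × Fin 3)) (C := |α| * a + 2 * |β| * a ^ 2 + |γ| * a ^ 3)
    ha hγ.le hmargin
  refine ⟨τ₀, hτ₀_pos, fun τ hτ hττ₀ Q hsym htr hQ => ?_⟩
  rw [frobNorm_eq_norm] at hQ ⊢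
  have := hstep τ hτ hττ₀ (WithLp.toLp 2 Q.vec) (WithLp.toLp 2 (fQ α β γ Q).vec)
  rw [← WithLp.toLp_smul, ← WithLp.toLp_add, ← vec_smul, ← vec_add] at this
  simp only [norm_toLp_vec, inner_toLp_vec] at this
  exact this hQ (norm_fQ_le α β γ hQ) ((trace_transpose_mul_fQ_le hsym htr hQ).trans_eq (by ring))
end

section
/- Let a > 0 satisfy b < a². Then there exists τ₀ > 0 (depending only on α, β, γ, a) such that for every time step 0 < τ ≤ τ₀ and every real 3×3 matrix Q that is symmetric and traceless with ‖Q‖_F ≤ a, one has ‖Q + τ·f(Q) + τ²·Df(Q)[f(Q)]‖_F ≤ a, where Df(Q)[f(Q)] is the Fréchet derivative of the map Q ↦ f(Q) at Q applied to f(Q). -/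
open Matrix

attribute [local instance] Matrix.frobeniusNormedAddCommGroup Matrix.frobeniusNormedSpace

namespace Stmt13Aux

noncomputable abbrev M3 := Matrix (Fin 3) (Fin 3) ℝ

noncomputable def ip (A B : M3) : ℝ := Matrix.trace (Aᵀ * B)

lemma ip_eq_sum (A B : M3) : ip A B = ∑ i, ∑ j, A i j * B i j := by
  unfold ip
  simp only [Matrix.trace, Matrix.diag, Matrix.mul_apply, Matrix.transpose_apply]
  rw [Finset.sum_comm]

lemma ip_self_nonneg (A : M3) : 0 ≤ ip A A := by
  rw [ip_eq_sum]
  apply Finset.sum_nonneg; intro i _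
  apply Finset.sum_nonneg; intro j _
  exact mul_self_nonneg _

lemma norm_eq_sqrt_ip (A : M3) : ‖A‖ = Real.sqrt (ip A A) := by
  rw [Matrix.frobenius_norm_def, ip_eq_sum, Real.sqrt_eq_rpow]
  congr 1
  refine Finset.sum_congr rfl fun i _ => Finset.sum_congr rfl fun j _ => ?_
  rw [show ((2:ℝ)) = ((2:ℕ):ℝ) by norm_num, Real.rpow_natCast]
  simp [Real.norm_eq_abs, sq_abs, sq]

lemma norm_sq_eq_ip (A : M3) : ‖A‖ ^ 2 = ip A A := by
  rw [norm_eq_sqrt_ip, Real.sq_sqrt (ip_self_nonneg A)]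

lemma frobNorm_eq (A : M3) : frobNorm A = ‖A‖ := by
  rw [norm_eq_sqrt_ip]; rfl

lemma abs_ip_le (A B : M3) : |ip A B| ≤ ‖A‖ * ‖B‖ := by
  have h2 : (ip A B) ^ 2 ≤ ip A A * ip B B := by
    rw [ip_eq_sum, ip_eq_sum A A, ip_eq_sum B B]
    simp only [← Finset.sum_product', Finset.univ_product_univ, ← sq]
    exact Finset.sum_mul_sq_le_sq_mul_sq _ _ _
  have ha := ip_self_nonneg A
  have hb := ip_self_nonneg B
  have := norm_sq_eq_ip A
  have := norm_sq_eq_ip B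
  nlinarith [abs_nonneg (ip A B), sq_abs (ip A B), norm_nonneg A, norm_nonneg B,
    mul_nonneg (norm_nonneg A) (norm_nonneg B)]

lemma ip_expand (A B : M3) (t : ℝ) :
    ip (A + t • B) (A + t • B) = ip A A + 2 * t * ip A B + t ^ 2 * ip B B := by
  simp only [ip_eq_sum, Matrix.add_apply, Matrix.smul_apply, smul_eq_mul]
  have h : ∀ i j : Fin 3, (A i j + t * B i j) * (A i j + t * B i j)
      = A i j * A i j + (2 * t) * (A i j * B i j) + t ^ 2 * (B i j * B i j) := by
    intro i j; ring
  simp_rw [h, Finset.sum_add_distrib, ← Finset.mul_sum]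

lemma isBBM_mul : IsBoundedBilinearMap ℝ (fun p : M3 × M3 => p.1 * p.2) where
  add_left := fun x₁ x₂ y => add_mul x₁ x₂ y
  smul_left := fun c x y => smul_mul_assoc c x y
  add_right := fun x y₁ y₂ => mul_add x y₁ y₂
  smul_right := fun c x y => mul_smul_comm c x y
  bound := ⟨1, one_pos, fun x y => by simpa using Matrix.frobenius_norm_mul x y⟩

lemma contDiff_sq : ContDiff ℝ (⊤ : ℕ∞) (fun Q : M3 => Q * Q) :=
  isBBM_mul.contDiff.comp (contDiff_id.prodMk contDiff_id)

noncomputable def traceCLM : M3 →L[ℝ] ℝ :=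
  LinearMap.toContinuousLinearMap (Matrix.traceLinearMap (Fin 3) ℝ ℝ)

lemma contDiff_trsq : ContDiff ℝ (⊤ : ℕ∞) (fun Q : M3 => Matrix.trace (Q * Q)) :=
  traceCLM.contDiff.comp contDiff_sq

lemma contDiff_fQ (α β γ : ℝ) : ContDiff ℝ (⊤ : ℕ∞) (fQ α β γ) := by
  unfold fQ
  exact (((contDiff_const (c := α)).smul contDiff_id).neg.add ((contDiff_const (c := β)).smul
      (contDiff_sq.sub ((contDiff_trsq.div_const 3).smul (contDiff_const (c := (1 : M3))))))).sub
    ((contDiff_const.mul contDiff_trsq).smul contDiff_id)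

lemma ip_fQ (α β γ : ℝ) (Q : M3) (hsym : Qᵀ = Q) (htr : Matrix.trace Q = 0) :
    ip Q (fQ α β γ Q) = -α * ip Q Q + β * ip Q (Q * Q) - γ * (ip Q Q) ^ 2 := by
  have hQQ : ip Q Q = Matrix.trace (Q * Q) := by unfold ip; rw [hsym]
  have hQ3 : ip Q (Q * Q) = Matrix.trace (Q * (Q * Q)) := by unfold ip; rw [hsym]
  unfold ip fQ
  rw [hsym]
  simp only [Matrix.mul_add, Matrix.mul_sub, Matrix.mul_neg, Matrix.mul_smul,
    Matrix.trace_add, Matrix.trace_sub, Matrix.trace_neg, Matrix.trace_smul,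
    Matrix.mul_one, smul_eq_mul, htr]
  rw [← hQQ, ← hQ3]
  ring

lemma eps_pos (α β γ a : ℝ) (hγ : 0 < γ) (ha : 0 < a)
    (hβ2 : β ^ 2 < 2 * α * γ + a ^ 2 * γ ^ 2) : 0 < γ * a ^ 2 + α - |β| * a := by
  have key : 2 * (|β| * a * γ) ≤ β ^ 2 + a ^ 2 * γ ^ 2 := by
    nlinarith [sq_nonneg (|β| - a * γ), sq_abs β]
  nlinarith [mul_pos hγ (mul_pos ha ha)]

lemma ipf_bound (α β γ a s t3 : ℝ) (hγ : 0 < γ) (hs0 : 0 ≤ s) (hsa : s ≤ a)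
    (ht3 : |t3| ≤ s * (s * s)) :
    -α * s ^ 2 + β * t3 - γ * (s ^ 2) ^ 2
      ≤ -(γ * a ^ 2 + α - |β| * a) * s ^ 2 + γ * a ^ 2 * (a ^ 2 - s ^ 2) := by
  have hβt3 : β * t3 ≤ |β| * (s * (s * s)) := by
    calc β * t3 ≤ |β * t3| := le_abs_self _
    _ = |β| * |t3| := abs_mul _ _
    _ ≤ |β| * (s * (s * s)) := mul_le_mul_of_nonneg_left ht3 (abs_nonneg β)
  nlinarith [hβt3, mul_nonneg hγ.le (sq_nonneg (a ^ 2 - s ^ 2)),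
    mul_nonneg (mul_nonneg (abs_nonneg β) (sq_nonneg s)) (sub_nonneg.2 hsa)]

lemma key_arith (γ a ε C M₁ M₂ τ s nF nu ipf : ℝ)
    (ha : 0 < a) (hε : 0 < ε) (hC0 : 0 < C)
    (hs0 : 0 ≤ s) (hsa : s ≤ a)
    (hτ0 : 0 < τ) (hτ1 : τ ≤ 1)
    (hτ2' : τ * (4 * γ * a ^ 2) ≤ 1) (hτ3' : τ * C ≤ ε * a ^ 2) (hτ4' : τ * (4 * C) ≤ a ^ 2)
    (hM₁0 : 0 ≤ M₁) (hM₂0 : 0 ≤ M₂)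
    (hF0 : 0 ≤ nF) (hF1 : nF ≤ M₁)
    (hipf : ipf ≤ -ε * s ^ 2 + γ * a ^ 2 * (a ^ 2 - s ^ 2))
    (hCdef : C = M₁ ^ 2 + 2 * M₂ * (a + M₁) + M₂ ^ 2 + 1)
    (hu0 : 0 ≤ nu) (hu_sq : nu ^ 2 = s ^ 2 + 2 * τ * ipf + τ ^ 2 * nF ^ 2)
    (hu_le : nu ≤ a + M₁) :
    nu + τ ^ 2 * M₂ ≤ a := by
  have hd0 : 0 ≤ a ^ 2 - s ^ 2 := by nlinarith
  have hττsq : τ ^ 2 ≤ 1 := by nlinarith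
  have hsq_le : (nu + τ ^ 2 * M₂) ^ 2 ≤ a ^ 2 := by
    have hF2 : nF ^ 2 ≤ M₁ ^ 2 := by nlinarith
    have h2 : 2 * τ ^ 2 * M₂ * nu ≤ 2 * τ ^ 2 * M₂ * (a + M₁) :=
      mul_le_mul_of_nonneg_left hu_le (by positivity)
    have h3 : τ ^ 4 * M₂ ^ 2 ≤ τ ^ 2 * M₂ ^ 2 := by
      linarith [mul_nonneg (mul_nonneg (sub_nonneg.2 hττsq) (sq_nonneg τ)) (sq_nonneg M₂)]
    have h4 : τ ^ 2 * nF ^ 2 ≤ τ ^ 2 * M₁ ^ 2 := mul_le_mul_of_nonneg_left hF2 (sq_nonneg τ)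
    have expand : (nu + τ ^ 2 * M₂) ^ 2 ≤ s ^ 2 + 2 * τ * ipf + τ ^ 2 * C := by
      have h1 : (nu + τ ^ 2 * M₂) ^ 2 = nu ^ 2 + 2 * τ ^ 2 * M₂ * nu + τ ^ 4 * M₂ ^ 2 := by ring
      rw [h1, hu_sq, hCdef]
      linarith [h2, h3, h4, sq_nonneg τ]
    have hip' : 2 * τ * ipf ≤ 2 * τ * (-ε * s ^ 2 + γ * a ^ 2 * (a ^ 2 - s ^ 2)) :=
      mul_le_mul_of_nonneg_left hipf (by positivity)
    have h2a : 2 * τ * (γ * a ^ 2 * (a ^ 2 - s ^ 2)) ≤ (a ^ 2 - s ^ 2) / 2 := by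
      linarith [mul_le_mul_of_nonneg_right hτ2' hd0]
    have harith : s ^ 2 + 2 * τ * ipf + τ ^ 2 * C ≤ a ^ 2 := by
      rcases le_or_gt (a ^ 2 / 2) (s ^ 2) with hcase | hcase
      · have hq : τ ^ 2 * C ≤ 2 * τ * ε * s ^ 2 := by
          linarith [mul_le_mul_of_nonneg_left hτ3' hτ0.le,
            mul_le_mul_of_nonneg_left hcase (mul_nonneg hτ0.le hε.le)]
        linarith [hip', h2a, hq, hd0]
      · have hq2 : τ ^ 2 * C ≤ a ^ 2 / 4 := by
          linarith [hτ4', mul_nonneg (mul_nonneg (sub_nonneg.2 hτ1) hτ0.le) hC0.le]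
        have hneg : 0 ≤ 2 * τ * ε * s ^ 2 := by positivity
        linarith [hip', h2a, hq2, hneg, hcase.le]
    linarith
  nlinarith [hsq_le, add_nonneg hu0 (mul_nonneg (sq_nonneg τ) hM₂0)]

end Stmt13Aux

set_option maxHeartbeats 1000000 in
open Stmt13Aux in
/-- Stability of the second-order step: if `b < a²` then for small enough `τ`,
`‖Q + τ·f(Q) + τ²·Df(Q)[f(Q)]‖_F ≤ a` for symmetric traceless `Q` with `‖Q‖_F ≤ a`. -/
theorem stmt13 (α β γ : ℝ) (hγ : 0 < γ) (b : ℝ) (hb : b = β ^ 2 / γ ^ 2 - 2 * α / γ)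
    (a : ℝ) (ha : 0 < a) (hba : b < a ^ 2) :
    ∃ τ₀ : ℝ, 0 < τ₀ ∧
      ∀ τ : ℝ, 0 < τ → τ ≤ τ₀ →
        ∀ Q : Matrix (Fin 3) (Fin 3) ℝ, Qᵀ = Q → Matrix.trace Q = 0 → frobNorm Q ≤ a →
          frobNorm (Q + τ • fQ α β γ Q
              + (τ ^ 2) • fderiv ℝ (fQ α β γ) Q (fQ α β γ Q)) ≤ a := by
  have hβ2 : β ^ 2 < 2 * α * γ + a ^ 2 * γ ^ 2 := by
    have h1 : β ^ 2 / γ ^ 2 - 2 * α / γ < a ^ 2 := hb ▸ hba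
    have h2 : (β ^ 2 / γ ^ 2 - 2 * α / γ) * γ ^ 2 < a ^ 2 * γ ^ 2 :=
      mul_lt_mul_of_pos_right h1 (by positivity)
    have h3 : (β ^ 2 / γ ^ 2 - 2 * α / γ) * γ ^ 2 = β ^ 2 - 2 * α * γ := by
      field_simp
    linarith [h3 ▸ h2]
  have hε : 0 < γ * a ^ 2 + α - |β| * a := eps_pos α β γ a hγ ha hβ2
  -- compactness bounds
  have hcd := contDiff_fQ α β γ
  have hcont : Continuous (fQ α β γ) := hcd.continuous
  have hcontG : Continuous (fun Q : M3 => fderiv ℝ (fQ α β γ) Q (fQ α β γ Q)) :=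
    (hcd.continuous_fderiv_apply (by simp)).comp (continuous_id.prodMk hcont)
  have hK : IsCompact (Metric.closedBall (0 : M3) a) := isCompact_closedBall _ _
  obtain ⟨C₁, hC₁⟩ := hK.exists_bound_of_continuousOn hcont.continuousOn
  obtain ⟨C₂, hC₂⟩ := hK.exists_bound_of_continuousOn hcontG.continuousOn
  have hM₁0 : (0:ℝ) ≤ max C₁ 0 := le_max_right _ _
  have hM0 : (0:ℝ) ≤ max C₂ 0 := le_max_right _ _
  have hM₂0 : (0:ℝ) ≤ max C₂ 0 := hM0
  have hC0 : (0:ℝ) < max C₁ 0 ^ 2 + 2 * (max C₂ 0) * (a + max C₁ 0)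
      + (max C₂ 0) ^ 2 + 1 := by positivity
  set ε : ℝ := γ * a ^ 2 + α - |β| * a with hεdef
  set M₁ : ℝ := max C₁ 0 with hM₁def
  set M₂ : ℝ := max C₂ 0 with hM₂def
  set C : ℝ := M₁ ^ 2 + 2 * M₂ * (a + M₁) + M₂ ^ 2 + 1 with hCdef
  refine ⟨min 1 (min (1 / (4 * γ * a ^ 2)) (min (ε * a ^ 2 / C) (a ^ 2 / (4 * C)))), ?_, ?_⟩
  · exact lt_min one_pos (lt_min (by positivity) (lt_min (by positivity) (by positivity)))
  intro τ hτ0 hττ₀ Q hsym htrQ hQa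
  have hτ1 : τ ≤ 1 := le_trans hττ₀ (min_le_left _ _)
  have hτ2 : τ ≤ 1 / (4 * γ * a ^ 2) := le_trans hττ₀ ((min_le_right _ _).trans (min_le_left _ _))
  have hτ3 : τ ≤ ε * a ^ 2 / C :=
    le_trans hττ₀ ((min_le_right _ _).trans ((min_le_right _ _).trans (min_le_left _ _)))
  have hτ4 : τ ≤ a ^ 2 / (4 * C) :=
    le_trans hττ₀ ((min_le_right _ _).trans ((min_le_right _ _).trans (min_le_right _ _)))
  have hτ2' : τ * (4 * γ * a ^ 2) ≤ 1 := (le_div_iff₀ (by positivity)).1 hτ2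
  have hτ3' : τ * C ≤ ε * a ^ 2 := (le_div_iff₀ hC0).1 hτ3
  have hτ4' : τ * (4 * C) ≤ a ^ 2 := (le_div_iff₀ (by positivity)).1 hτ4
  have hs0 : (0:ℝ) ≤ ‖Q‖ := norm_nonneg Q
  have hsa : ‖Q‖ ≤ a := by rwa [frobNorm_eq] at hQa
  have hQK : Q ∈ Metric.closedBall (0 : M3) a := by
    rw [Metric.mem_closedBall, dist_zero_right]; exact hsa
  -- bounds on F and G
  have hF1 : ‖fQ α β γ Q‖ ≤ M₁ := le_trans (hC₁ Q hQK) (le_max_left _ _)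
  have hG : ‖fderiv ℝ (fQ α β γ) Q (fQ α β γ Q)‖ ≤ M₂ :=
    le_trans (hC₂ Q hQK) (le_max_left _ _)
  -- the key inner product estimate
  have hipQQ : ip Q Q = ‖Q‖ ^ 2 := (norm_sq_eq_ip Q).symm
  have hipf : ip Q (fQ α β γ Q) ≤ -ε * ‖Q‖ ^ 2 + γ * a ^ 2 * (a ^ 2 - ‖Q‖ ^ 2) := by
    have ht3 : |ip Q (Q * Q)| ≤ ‖Q‖ * (‖Q‖ * ‖Q‖) := by
      calc |ip Q (Q * Q)| ≤ ‖Q‖ * ‖Q * Q‖ := abs_ip_le _ _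
      _ ≤ ‖Q‖ * (‖Q‖ * ‖Q‖) := by
          apply mul_le_mul_of_nonneg_left _ hs0
          simpa using Matrix.frobenius_norm_mul Q Q
    have hform := ip_fQ α β γ Q hsym htrQ
    rw [hform, hipQQ, hεdef]
    exact ipf_bound α β γ a ‖Q‖ (ip Q (Q * Q)) hγ hs0 hsa ht3
  -- norm expansion
  have hu_sq : ‖Q + τ • fQ α β γ Q‖ ^ 2
      = ‖Q‖ ^ 2 + 2 * τ * ip Q (fQ α β γ Q) + τ ^ 2 * ‖fQ α β γ Q‖ ^ 2 := by
    rw [norm_sq_eq_ip, ip_expand, ← hipQQ, norm_sq_eq_ip]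
  have hu_le : ‖Q + τ • fQ α β γ Q‖ ≤ a + M₁ := by
    calc ‖Q + τ • fQ α β γ Q‖ ≤ ‖Q‖ + ‖τ • fQ α β γ Q‖ := norm_add_le _ _
    _ = ‖Q‖ + |τ| * ‖fQ α β γ Q‖ := by rw [norm_smul, Real.norm_eq_abs]
    _ ≤ a + 1 * M₁ := by
        rw [abs_of_pos hτ0]
        exact add_le_add hsa (mul_le_mul hτ1 hF1 (norm_nonneg _) zero_le_one)
    _ = a + M₁ := by ring
  -- total bound
  have htot : ‖Q + τ • fQ α β γ Q + τ ^ 2 • fderiv ℝ (fQ α β γ) Q (fQ α β γ Q)‖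
      ≤ ‖Q + τ • fQ α β γ Q‖ + τ ^ 2 * M₂ := by
    calc ‖Q + τ • fQ α β γ Q + τ ^ 2 • fderiv ℝ (fQ α β γ) Q (fQ α β γ Q)‖
        ≤ ‖Q + τ • fQ α β γ Q‖ + ‖τ ^ 2 • fderiv ℝ (fQ α β γ) Q (fQ α β γ Q)‖ :=
          norm_add_le _ _
    _ ≤ ‖Q + τ • fQ α β γ Q‖ + τ ^ 2 * M₂ := by
        rw [norm_smul, Real.norm_eq_abs, abs_of_nonneg (sq_nonneg τ)]
        exact add_le_add_right (mul_le_mul_of_nonneg_left hG (sq_nonneg τ)) _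
  have hkey := key_arith γ a ε C M₁ M₂ τ ‖Q‖ ‖fQ α β γ Q‖ ‖Q + τ • fQ α β γ Q‖
    (ip Q (fQ α β γ Q)) ha hε hC0 hs0 hsa hτ0 hτ1 hτ2' hτ3' hτ4' hM₁0 hM₂0
    (norm_nonneg _) hF1 hipf hCdef (norm_nonneg _) hu_sq hu_le
  rw [frobNorm_eq]
  linarith [htot, hkey]
end
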